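/- arXiv:math/0110307 — 2 statements merged into one kernel-verified Lean document; each statement's English description precedes it below -/
import Mathlib

section
/- The refined q-trinomial S satisfies the duality S(L,M,a,b;1/q) = q^{ab-LM} S(L,M,a,b;q) for all integers L,M ≥ 0 and a,b. -/
open Finset

noncomputable section

/-- The field of rational functions over ℚ in which the identities are stated. -/
abbrev K : Type := RatFunc ℚ

/-- The variable. -/
def tq : K := RatFunc.X

/-- Gaussian binomial coefficient `[n choose k]` in the variable `p`:
`∏_{j=1}^{k} (1 - p^(n-k+j))/(1 - p^j)` when `0 ≤ k ≤ n`, and `0` otherwise. -/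
def gb (p : K) (n k : ℤ) : K :=
  if 0 ≤ k ∧ k ≤ n then
    ∏ j ∈ Finset.range k.toNat, (1 - p ^ (n - k + 1 + (j : ℤ))) / (1 - p ^ (1 + (j : ℤ)))
  else 0

/-- The refined q-trinomial
`S(L,M,a,b) = Σ_{k=0}^L p^{k(k+a)} [L+M-a-2k choose M][M-a+b choose k][M+a-b choose k+a]`. -/
def Sr (p : K) (L M a b : ℤ) : K :=
  ∑ k ∈ Finset.range (L.toNat + 1),
    p ^ ((k : ℤ) * ((k : ℤ) + a)) * gb p (L + M - a - 2 * k) M * gb p (M - a + b) k *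
      gb p (M + a - b) ((k : ℤ) + a)

lemma tq_ne : tq ≠ 0 := RatFunc.X_ne_zero

lemma gb_inv (n k : ℤ) : gb tq⁻¹ n k = tq ^ (-(k * (n - k))) * gb tq n k := by
  unfold gb
  split_ifs with h
  · obtain ⟨hk, hkn⟩ := h
    have key : ∀ A B : ℤ, (1 - tq⁻¹ ^ A) / (1 - tq⁻¹ ^ B)
        = tq ^ (B - A) * ((1 - tq ^ A) / (1 - tq ^ B)) := by
      intro A B
      rw [inv_zpow, inv_zpow, ← zpow_neg, ← zpow_neg]
      have hA : tq ^ (-A) * tq ^ A = 1 := by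
        rw [← zpow_add₀ tq_ne]; simp
      have hB : tq ^ (-B) * tq ^ B = 1 := by
        rw [← zpow_add₀ tq_ne]; simp
      have h1 : (1 : K) - tq ^ (-A) = -tq ^ (-A) * (1 - tq ^ A) := by
        linear_combination -hA
      have h2 : (1 : K) - tq ^ (-B) = -tq ^ (-B) * (1 - tq ^ B) := by
        linear_combination -hB
      rw [h1, h2, mul_div_mul_comm, neg_div_neg_eq, ← zpow_sub₀ tq_ne]
      ring_nf
    have hprod : ∏ j ∈ Finset.range k.toNat,
        (1 - tq⁻¹ ^ (n - k + 1 + (j : ℤ))) / (1 - tq⁻¹ ^ (1 + (j : ℤ)))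
        = ∏ j ∈ Finset.range k.toNat,
          tq ^ (k - n) * ((1 - tq ^ (n - k + 1 + (j : ℤ))) / (1 - tq ^ (1 + (j : ℤ)))) := by
      refine Finset.prod_congr rfl fun j _ => ?_
      rw [key]
      congr 2
      ring
    rw [hprod, Finset.prod_mul_distrib, Finset.prod_const, ← zpow_natCast (tq ^ (k - n)),
      ← zpow_mul, Finset.card_range, Int.toNat_of_nonneg hk]
    congr 2
    ring
  · simp

/-- Duality: `S(L,M,a,b;1/q) = q^{ab-LM} S(L,M,a,b;q)`. -/
theorem S_duality (L M : ℕ) (a b : ℤ) :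
    Sr tq⁻¹ L M a b = tq ^ (a * b - (L : ℤ) * M) * Sr tq L M a b := by
  unfold Sr
  rw [Finset.mul_sum]
  refine Finset.sum_congr rfl ?_
  intro k hk
  simp only [gb_inv, inv_zpow, ← zpow_neg]
  have h4 : ∀ (x y z w : ℤ) (g1 g2 g3 : K),
      tq ^ x * (tq ^ y * g1) * (tq ^ z * g2) * (tq ^ w * g3)
      = tq ^ (x + y + z + w) * (g1 * g2 * g3) := by
    intros x y z w g1 g2 g3
    rw [zpow_add₀ tq_ne, zpow_add₀ tq_ne, zpow_add₀ tq_ne]; ring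
  have h2 : ∀ (u v : ℤ) (g1 g2 g3 : K),
      tq ^ u * (tq ^ v * g1 * g2 * g3) = tq ^ (u + v) * (g1 * g2 * g3) := by
    intros u v g1 g2 g3
    rw [zpow_add₀ tq_ne]; ring
  rw [h4, h2]
  congr 1
  ring
end
end

section
/- (U-delta identity) Define U(L,M,a,b) = T(L,M,a,b) + T(L,M,a+1,b). Then for all integers L, M ≥ 0: Σ_{j∈ℤ} (-1)^j q^{j(j+1)/2} U(L,M,j,j) = δ_{M,0}. -/
open Finset

noncomputable section

-- basic facts about tq
lemma tq_ne_zero : (tq : K) ≠ 0 := by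
  simpa [tq] using RatFunc.X_ne_zero (K := ℚ)

lemma tq_sq_ne_zero : (tq ^ 2 : K) ≠ 0 := pow_ne_zero _ tq_ne_zero

lemma tq_pow_ne_one {s : ℕ} (hs : s ≠ 0) : (tq : K) ^ s ≠ 1 := by
  intro h
  have h1 : (algebraMap (Polynomial ℚ) K) (Polynomial.X ^ s) =
      (algebraMap (Polynomial ℚ) K) 1 := by
    rw [map_pow, map_one, RatFunc.algebraMap_X]
    exact h
  have h2 := RatFunc.algebraMap_injective ℚ h1
  have := congrArg Polynomial.natDegree h2
  simp [Polynomial.natDegree_X_pow] at this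
  exact hs this

lemma one_sub_qpow_ne {m : ℤ} (hm : 0 < m) : (1 : K) - (tq ^ 2) ^ m ≠ 0 := by
  intro h
  have h' : ((tq ^ 2 : K)) ^ m = 1 := by linear_combination -h
  have h2 : (tq : K) ^ (2 * m.toNat) = 1 := by
    have hm' : ((tq ^ 2 : K)) ^ m = (tq ^ 2) ^ (m.toNat : ℤ) := by congr 1; omega
    rw [hm', zpow_natCast, ← pow_mul] at h'
    exact h'
  exact tq_pow_ne_one (by omega) h2


lemma gb_of_not {p : K} {n k : ℤ} (h : ¬(0 ≤ k ∧ k ≤ n)) : gb p n k = 0 := if_neg h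

lemma gb_k0 {p : K} {n : ℤ} (hn : 0 ≤ n) : gb p n 0 = 1 := by
  rw [gb, if_pos ⟨le_refl 0, hn⟩]
  simp

lemma gb_self {n : ℤ} (hn : 0 ≤ n) : gb (tq ^ 2) n n = 1 := by
  rw [gb, if_pos ⟨hn, le_refl n⟩]
  apply Finset.prod_eq_one
  intro j hj
  rw [show n - n + 1 + (j : ℤ) = 1 + j by ring]
  exact div_self (one_sub_qpow_ne (by omega))

lemma gb_ratioA {n k : ℤ} (hk : 1 ≤ k) (hkn : k ≤ n) :
    gb (tq ^ 2) n k * (1 - (tq ^ 2) ^ k) = gb (tq ^ 2) (n - 1) (k - 1) * (1 - (tq ^ 2) ^ n) := by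
  rw [gb, gb, if_pos ⟨by omega, hkn⟩, if_pos ⟨by omega, by omega⟩]
  have htn : k.toNat = (k - 1).toNat + 1 := by omega
  rw [htn, Finset.prod_range_succ]
  have hfac : ∀ j ∈ Finset.range (k - 1).toNat,
      (1 - (tq ^ 2) ^ (n - k + 1 + (j : ℤ))) / (1 - (tq ^ 2) ^ (1 + (j : ℤ)))
      = (1 - (tq ^ 2) ^ (n - 1 - (k - 1) + 1 + (j : ℤ))) / (1 - (tq ^ 2) ^ (1 + (j : ℤ))) := by
    intro j hj
    congr 3
    ring
  rw [Finset.prod_congr rfl hfac]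
  rw [show (n - k + 1 + (((k - 1).toNat : ℕ) : ℤ)) = n by omega,
      show ((1 : ℤ) + (((k - 1).toNat : ℕ) : ℤ)) = k by omega]
  have hden : (1 : K) - (tq ^ 2) ^ k ≠ 0 := one_sub_qpow_ne (by omega)
  rw [mul_assoc, div_mul_cancel₀ _ hden]

lemma gb_ratioB {n k : ℤ} (hk : 1 ≤ k) (hkn : k ≤ n) :
    gb (tq ^ 2) (n - 1) k * (1 - (tq ^ 2) ^ n) = gb (tq ^ 2) n k * (1 - (tq ^ 2) ^ (n - k)) := by
  rcases eq_or_lt_of_le hkn with rfl | hlt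
  · rw [gb_of_not (show ¬((0:ℤ) ≤ k ∧ k ≤ k - 1) by omega), gb_self (by omega)]
    simp
  · rw [gb, gb, if_pos ⟨by omega, by omega⟩, if_pos ⟨by omega, by omega⟩]
    have e1 : ∀ j ∈ Finset.range k.toNat,
        (1 - (tq ^ 2) ^ (n - 1 - k + 1 + (j : ℤ))) / (1 - (tq ^ 2) ^ (1 + (j : ℤ)))
        = (1 - (tq ^ 2) ^ (n - k + (j : ℤ))) / (1 - (tq ^ 2) ^ (1 + (j : ℤ))) := by
      intro j hj; congr 3; ring
    rw [Finset.prod_congr rfl e1, Finset.prod_div_distrib, Finset.prod_div_distrib]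
    have hD : (∏ j ∈ Finset.range k.toNat, ((1 : K) - (tq ^ 2) ^ (1 + (j : ℤ)))) ≠ 0 := by
      apply Finset.prod_ne_zero_iff.mpr
      intro j hj
      exact one_sub_qpow_ne (by omega)
    rw [div_mul_eq_mul_div, div_mul_eq_mul_div, div_eq_div_iff hD hD]
    have t1 : (∏ j ∈ Finset.range (k.toNat + 1), ((1 : K) - (tq ^ 2) ^ (n - k + (j : ℤ))))
        = (∏ j ∈ Finset.range k.toNat, ((1 : K) - (tq ^ 2) ^ (n - k + (j : ℤ)))) * (1 - (tq ^ 2) ^ n) := by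
      rw [Finset.prod_range_succ, show (n - k + ((k.toNat : ℕ) : ℤ)) = n by omega]
    have t2 : (∏ j ∈ Finset.range (k.toNat + 1), ((1 : K) - (tq ^ 2) ^ (n - k + (j : ℤ))))
        = (∏ j ∈ Finset.range k.toNat, ((1 : K) - (tq ^ 2) ^ (n - k + 1 + (j : ℤ)))) * (1 - (tq ^ 2) ^ (n - k)) := by
      rw [Finset.prod_range_succ']
      congr 1
      · apply Finset.prod_congr rfl
        intro j hj
        have : (n - k + ((j : ℤ) + 1)) = n - k + 1 + (j : ℤ) := by ring
        rw [show (((j + 1 : ℕ)) : ℤ) = (j : ℤ) + 1 by push_cast; ring, this]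
      · norm_num
    have key : (∏ j ∈ Finset.range k.toNat, ((1 : K) - (tq ^ 2) ^ (n - k + (j : ℤ)))) * (1 - (tq ^ 2) ^ n)
        = (∏ j ∈ Finset.range k.toNat, ((1 : K) - (tq ^ 2) ^ (n - k + 1 + (j : ℤ)))) * (1 - (tq ^ 2) ^ (n - k)) := by
      rw [← t1, t2]
    linear_combination key * (∏ j ∈ Finset.range k.toNat, ((1 : K) - (tq ^ 2) ^ (1 + (j : ℤ))))

lemma gb_pascal (n k : ℤ) (h : ¬(n = 0 ∧ k = 0)) :
    gb (tq ^ 2) n k = gb (tq ^ 2) (n - 1) (k - 1) + (tq ^ 2) ^ k * gb (tq ^ 2) (n - 1) k := by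
  rcases lt_or_ge k 0 with hk | hk
  · rw [gb_of_not (by omega), gb_of_not (by omega), gb_of_not (by omega)]
    ring
  rcases eq_or_lt_of_le hk with rfl | hk1
  · -- k = 0, n ≠ 0
    rw [gb_of_not (show ¬((0:ℤ) ≤ 0 - 1 ∧ 0 - 1 ≤ n - 1) by omega)]
    rcases lt_or_ge n 0 with hn | hn
    · rw [gb_of_not (by omega), gb_of_not (by omega)]
      ring
    · have hn1 : (1:ℤ) ≤ n := by omega
      rw [gb_k0 hn, gb_k0 (by omega : (0:ℤ) ≤ n - 1)]
      simp
  · -- 1 ≤ k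
    rcases lt_or_ge n k with hnk | hnk
    · rw [gb_of_not (by omega), gb_of_not (by omega), gb_of_not (by omega)]
      ring
    · -- 1 ≤ k ≤ n
      have hn : (1:K) - (tq ^ 2) ^ n ≠ 0 := one_sub_qpow_ne (by omega)
      apply mul_right_cancel₀ hn
      have hA := gb_ratioA (by omega : 1 ≤ k) hnk
      have hB := gb_ratioB (by omega : 1 ≤ k) hnk
      have hsum : (tq ^ 2 : K) ^ k * (tq ^ 2) ^ (n - k) = (tq ^ 2) ^ n := by
        rw [← zpow_add₀ tq_sq_ne_zero]
        congr 1
        ring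
      linear_combination hA - (tq ^ 2) ^ k * hB + gb (tq ^ 2) n k * hsum

/-- summand of the auxiliary alternating sum -/
def ww (l P Q : ℕ) (j : ℤ) : K :=
  (-1 : K) ^ j * tq ^ (j * (j + 1)) *
    gb (tq ^ 2) ((P : ℤ) + j + ((l : ℤ) - j) / 2) ((P : ℤ) + j) *
    gb (tq ^ 2) ((Q : ℤ) - j + ((l : ℤ) - ((l : ℤ) - j) / 2)) ((Q : ℤ) - j)

def inn (l P Q : ℕ) : K := ∑ j ∈ Finset.Icc (-(P : ℤ)) (Q : ℤ), ww l P Q j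

lemma ww_left {l P Q : ℕ} {j : ℤ} (h : j < -(P : ℤ)) : ww l P Q j = 0 := by
  rw [ww, gb_of_not (show ¬((0:ℤ) ≤ (P : ℤ) + j ∧ (P : ℤ) + j ≤ (P : ℤ) + j + ((l : ℤ) - j) / 2) by omega)]
  ring

lemma ww_right {l P Q : ℕ} {j : ℤ} (h : (Q : ℤ) < j) : ww l P Q j = 0 := by
  rw [ww, gb_of_not (show ¬((0:ℤ) ≤ (Q : ℤ) - j ∧ (Q : ℤ) - j ≤ (Q : ℤ) - j + ((l : ℤ) - ((l : ℤ) - j) / 2)) by omega)]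
  ring

lemma sum_Icc_shift (f : ℤ → K) (a b c : ℤ) :
    ∑ j ∈ Finset.Icc (a + c) (b + c), f j = ∑ j ∈ Finset.Icc a b, f (j + c) := by
  rw [← Finset.map_add_right_Icc, Finset.sum_map]
  rfl

lemma neg_one_zpow_succ (j : ℤ) : (-1 : K) ^ (j + 1) = -((-1 : K) ^ j) := by
  rw [zpow_add₀ (by norm_num : (-1 : K) ≠ 0), zpow_one]
  ring

lemma tq_sq_zpow (m : ℤ) : ((tq ^ 2 : K)) ^ m = tq ^ (2 * m) := by
  rw [show (tq ^ 2 : K) = tq ^ ((2 : ℕ) : ℤ) from (zpow_natCast tq 2).symm, ← zpow_mul]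
  norm_num

lemma R1 (l P Q : ℕ) :
    inn (l + 1) (P + 1) Q
      = inn (l + 1) P Q - tq ^ (2 * (P : ℤ)) * inn l P (Q + 1) := by
  have expand : ∀ j ∈ Finset.Icc (-((P + 1 : ℕ) : ℤ)) ((Q : ℕ) : ℤ),
      ww (l + 1) (P + 1) Q j
        = ww (l + 1) P Q j + (- (tq ^ (2 * (P : ℤ))) * ww l P (Q + 1) (j + 1)) := by
    intro j hj
    simp only [Finset.mem_Icc] at hj
    simp only [ww]
    push_cast
    have hp := gb_pascal ((P : ℤ) + 1 + j + (((l : ℤ) + 1) - j) / 2) ((P : ℤ) + 1 + j)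
      (by intro ⟨h1, h2⟩; omega)
    rw [show ((P : ℤ) + 1 + j + (((l : ℤ) + 1) - j) / 2 - 1) = (P : ℤ) + j + ((l : ℤ) + 1 - j) / 2 by ring,
        show ((P : ℤ) + 1 + j - 1) = (P : ℤ) + j by ring] at hp
    rw [hp]
    -- identify the shifted gb arguments
    rw [show ((P : ℤ) + (j + 1) + ((l : ℤ) - (j + 1)) / 2) = (P : ℤ) + j + ((l : ℤ) + 1 - j) / 2 by omega,
        show ((Q : ℤ) + 1 - (j + 1) + ((l : ℤ) - ((l : ℤ) - (j + 1)) / 2)) =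
          (Q : ℤ) - j + ((l : ℤ) + 1 - ((l : ℤ) + 1 - j) / 2) by omega,
        show ((P : ℤ) + (j + 1)) = (P : ℤ) + 1 + j by ring,
        show ((Q : ℤ) + 1 - (j + 1)) = (Q : ℤ) - j by ring]
    -- now pure algebra of prefactors
    rw [neg_one_zpow_succ, tq_sq_zpow]
    rw [show tq ^ (2 * ((P : ℤ) + 1 + j)) = tq ^ (2 * (P : ℤ)) * tq ^ (2 * j + 2) from by
      rw [← zpow_add₀ tq_ne_zero]; congr 1; ring]
    rw [show tq ^ ((j + 1) * (j + 1 + 1)) = tq ^ (j * (j + 1)) * tq ^ (2 * j + 2) from by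
      rw [← zpow_add₀ tq_ne_zero]; congr 1; ring]
    ring
  rw [show ((P + 1 : ℕ) : ℤ) = (P : ℤ) + 1 from by push_cast; ring] at expand
  have h1 : ∑ j ∈ Finset.Icc (-((P:ℤ)+1)) ((Q:ℕ) : ℤ), ww (l+1) P Q j
      = inn (l+1) P Q := by
    rw [inn]
    symm
    apply Finset.sum_subset
    · intro x hx
      simp only [Finset.mem_Icc] at hx ⊢
      omega
    · intro x hx hnx
      simp only [Finset.mem_Icc] at hx hnx
      exact ww_left (by omega)
  have h2 : ∑ j ∈ Finset.Icc (-((P:ℤ)+1)) ((Q:ℕ) : ℤ), ww l P (Q+1) (j+1)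
      = inn l P (Q + 1) := by
    rw [inn, show (-((P : ℤ)) : ℤ) = -((P:ℤ)+1) + 1 by ring,
      show (((Q+1 : ℕ)) : ℤ) = (Q : ℤ) + 1 from by push_cast; ring, sum_Icc_shift]
  calc inn (l+1) (P+1) Q
      = ∑ j ∈ Finset.Icc (-((P:ℤ)+1)) ((Q:ℕ) : ℤ),
          (ww (l+1) P Q j + (- (tq ^ (2 * (P : ℤ))) * ww l P (Q+1) (j+1))) := by
        rw [inn, show (-(((P + 1 : ℕ)) : ℤ)) = -((P : ℤ) + 1) from by push_cast; ring]
        exact Finset.sum_congr rfl expand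
    _ = (∑ j ∈ Finset.Icc (-((P:ℤ)+1)) ((Q:ℕ) : ℤ), ww (l+1) P Q j)
        + (- (tq ^ (2 * (P : ℤ)))) * ∑ j ∈ Finset.Icc (-((P:ℤ)+1)) ((Q:ℕ) : ℤ), ww l P (Q+1) (j+1) := by
        rw [Finset.sum_add_distrib, ← Finset.mul_sum]
    _ = inn (l+1) P Q - tq ^ (2 * (P : ℤ)) * inn l P (Q + 1) := by
        rw [h1, h2]; ring

lemma neg_one_zpow_pred (j : ℤ) : (-1 : K) ^ (j - 1) = -((-1 : K) ^ j) := by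
  have h := neg_one_zpow_succ (j - 1)
  rw [show j - 1 + 1 = j by ring] at h
  rw [h]
  ring

lemma sum_Icc_shift_sub (f : ℤ → K) (a b : ℤ) :
    ∑ j ∈ Finset.Icc a b, f (j - 1) = ∑ j ∈ Finset.Icc (a - 1) (b - 1), f j := by
  rw [show a - 1 = a + (-1) by ring, show b - 1 = b + (-1) by ring, sum_Icc_shift]
  apply Finset.sum_congr rfl
  intro x hx
  rw [show x + (-1) = x - 1 by ring]

lemma R2 (l P Q : ℕ) :
    inn (l + 1) P (Q + 1)
      = inn (l + 1) P Q - tq ^ (2 * ((Q : ℤ) + 1)) * inn l (P + 1) Q := by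
  have expand : ∀ j ∈ Finset.Icc (-((P : ℕ) : ℤ)) ((Q : ℤ) + 1),
      ww (l + 1) P (Q + 1) j
        = ww (l + 1) P Q j + (- (tq ^ (2 * ((Q : ℤ) + 1))) * ww l (P + 1) Q (j - 1)) := by
    intro j hj
    simp only [Finset.mem_Icc] at hj
    simp only [ww]
    push_cast
    have hp := gb_pascal ((Q : ℤ) + 1 - j + (((l : ℤ) + 1) - (((l : ℤ) + 1) - j) / 2)) ((Q : ℤ) + 1 - j)
      (by intro ⟨h1, h2⟩; omega)
    rw [show ((Q : ℤ) + 1 - j + (((l : ℤ) + 1) - (((l : ℤ) + 1) - j) / 2) - 1)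
          = (Q : ℤ) - j + ((l : ℤ) + 1 - ((l : ℤ) + 1 - j) / 2) by ring,
        show ((Q : ℤ) + 1 - j - 1) = (Q : ℤ) - j by ring] at hp
    rw [show ((Q : ℤ) + 1 - j + ((l : ℤ) + 1 - ((l : ℤ) + 1 - j) / 2))
          = ((Q : ℤ) + 1 - j + (((l : ℤ) + 1) - (((l : ℤ) + 1) - j) / 2)) by ring, hp]
    -- identify shifted gb arguments of the cross term
    rw [show ((P : ℤ) + 1 + (j - 1) + ((l : ℤ) - (j - 1)) / 2) = (P : ℤ) + j + ((l : ℤ) + 1 - j) / 2 by omega,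
        show ((Q : ℤ) - (j - 1) + ((l : ℤ) - ((l : ℤ) - (j - 1)) / 2))
          = (Q : ℤ) - j + ((l : ℤ) + 1 - ((l : ℤ) + 1 - j) / 2) by omega,
        show ((P : ℤ) + 1 + (j - 1)) = (P : ℤ) + j by ring,
        show ((Q : ℤ) - (j - 1)) = (Q : ℤ) + 1 - j by ring]
    rw [neg_one_zpow_pred, tq_sq_zpow]
    rw [show tq ^ (2 * ((Q : ℤ) + 1 - j)) = tq ^ (2 * ((Q : ℤ) + 1)) * tq ^ (-(2 * j)) from by
      rw [← zpow_add₀ tq_ne_zero]; congr 1; ring]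
    rw [show tq ^ ((j - 1) * (j - 1 + 1)) = tq ^ (j * (j + 1)) * tq ^ (-(2 * j)) from by
      rw [← zpow_add₀ tq_ne_zero]; congr 1; ring]
    ring
  have h1 : ∑ j ∈ Finset.Icc (-((P : ℕ) : ℤ)) ((Q : ℤ) + 1), ww (l+1) P Q j
      = inn (l+1) P Q := by
    rw [inn]
    symm
    apply Finset.sum_subset
    · intro x hx
      simp only [Finset.mem_Icc] at hx ⊢
      omega
    · intro x hx hnx
      simp only [Finset.mem_Icc] at hx hnx
      exact ww_right (by omega)
  have h2 : ∑ j ∈ Finset.Icc (-((P : ℕ) : ℤ)) ((Q : ℤ) + 1), ww l (P+1) Q (j - 1)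
      = inn l (P + 1) Q := by
    rw [sum_Icc_shift_sub, show ((Q : ℤ) + 1 - 1) = ((Q : ℕ) : ℤ) by ring,
      show (-((P : ℕ) : ℤ) - 1) = (-(((P + 1 : ℕ)) : ℤ)) from by push_cast; ring, inn]
  calc inn (l+1) P (Q+1)
      = ∑ j ∈ Finset.Icc (-((P : ℕ) : ℤ)) ((Q : ℤ) + 1),
          (ww (l+1) P Q j + (- (tq ^ (2 * ((Q : ℤ) + 1))) * ww l (P+1) Q (j - 1))) := by
        rw [inn, show (((Q + 1 : ℕ)) : ℤ) = (Q : ℤ) + 1 from by push_cast; ring]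
        exact Finset.sum_congr rfl expand
    _ = (∑ j ∈ Finset.Icc (-((P : ℕ) : ℤ)) ((Q : ℤ) + 1), ww (l+1) P Q j)
        + (- (tq ^ (2 * ((Q : ℤ) + 1)))) * ∑ j ∈ Finset.Icc (-((P : ℕ) : ℤ)) ((Q : ℤ) + 1), ww l (P+1) Q (j - 1) := by
        rw [Finset.sum_add_distrib, ← Finset.mul_sum]
    _ = inn (l+1) P Q - tq ^ (2 * ((Q : ℤ) + 1)) * inn l (P + 1) Q := by
        rw [h1, h2]; ring

lemma inn_00 (l : ℕ) : inn l 0 0 = 1 := by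
  rw [inn]
  norm_num
  rw [ww]
  norm_num
  rw [gb_k0 (show (0:ℤ) ≤ (l : ℤ) / 2 by omega),
      gb_k0 (show (0:ℤ) ≤ (l : ℤ) - (l : ℤ) / 2 by omega)]
  norm_num

lemma inn_l0_P0 (Q : ℕ) : inn 0 0 Q = 1 := by
  rw [inn]
  rw [Finset.sum_eq_single_of_mem 0 (by simp)]
  · rw [ww]
    norm_num
    rw [gb_k0 le_rfl, gb_self (by omega : (0:ℤ) ≤ (Q : ℤ))]
    norm_num
  · intro j hj hj0
    simp only [Finset.mem_Icc] at hj
    rw [ww, gb_of_not (show ¬((0:ℤ) ≤ ((0:ℕ) : ℤ) + j ∧ ((0:ℕ) : ℤ) + j ≤ ((0:ℕ) : ℤ) + j + (((0:ℕ) : ℤ) - j) / 2) by omega)]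
    ring

lemma inn_l0_P1 (P Q : ℕ) : inn 0 (P + 1) Q = 0 := by
  rw [inn]
  rw [← Finset.sum_subset (show ({-1, 0} : Finset ℤ) ⊆ Finset.Icc (-((P+1 : ℕ) : ℤ)) ((Q:ℕ) : ℤ) by
      intro x hx
      simp only [Finset.mem_insert, Finset.mem_singleton] at hx
      simp only [Finset.mem_Icc]
      rcases hx with rfl | rfl <;> constructor <;> push_cast <;> omega)]
  · rw [Finset.sum_pair (by norm_num : (-1 : ℤ) ≠ 0), ww, ww]
    push_cast
    norm_num
    rw [gb_self (show (0:ℤ) ≤ (P:ℤ) by omega), gb_self (show (0:ℤ) ≤ (Q:ℤ) + 1 by omega),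
      gb_self (show (0:ℤ) ≤ (P:ℤ) + 1 by omega), gb_self (show (0:ℤ) ≤ (Q:ℤ) by omega)]
    ring
  · intro j hj hnj
    simp only [Finset.mem_Icc] at hj
    simp only [Finset.mem_insert, Finset.mem_singleton] at hnj
    push_neg at hnj
    rcases lt_or_ge j 0 with hneg | hpos
    · -- j ≤ -2 : second gb dies
      rw [ww, gb_of_not (show ¬((0:ℤ) ≤ (Q:ℤ) - j ∧ (Q:ℤ) - j ≤ (Q : ℤ) - j + (((0:ℕ) : ℤ) - (((0:ℕ) : ℤ) - j) / 2)) by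
        push_cast
        omega)]
      ring
    · -- j ≥ 1 : first gb dies
      rw [ww, gb_of_not (show ¬((0:ℤ) ≤ ((P+1:ℕ):ℤ) + j ∧ ((P+1:ℕ):ℤ) + j ≤ ((P+1:ℕ):ℤ) + j + (((0:ℕ) : ℤ) - j) / 2) by
        push_cast
        omega)]
      ring

lemma inn_key (l P Q : ℕ) : inn l P Q = if P = 0 then 1 else 0 := by
  induction l generalizing P Q with
  | zero =>
    cases P with
    | zero => simpa using inn_l0_P0 Q
    | succ P => simpa using inn_l0_P1 P Q
  | succ l ih =>
    have C1 : ∀ Q' : ℕ, inn (l + 1) 0 Q' = 1 := by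
      intro Q'
      induction Q' with
      | zero => exact inn_00 (l + 1)
      | succ Q' ihQ =>
        rw [R2 l 0 Q', ihQ, ih 1 Q']
        norm_num
    have C2 : ∀ P' Q' : ℕ, inn (l + 1) (P' + 1) Q' = 0 := by
      intro P'
      induction P' with
      | zero =>
        intro Q'
        rw [R1 l 0 Q', C1 Q', ih 0 (Q' + 1)]
        norm_num
      | succ P' ihP =>
        intro Q'
        rw [R1 l (P' + 1) Q', ihP Q', ih (P' + 1) (Q' + 1)]
        norm_num
    cases P with
    | zero => simpa using C1 Q
    | succ P => simpa using C2 P Q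

/-- The refined q-trinomial `T(L,M,a,b)`, in the variable `t = q^{1/2}` (so base-`q`
Gaussian binomials use `t^2`):
`T(L,M,a,b) = Σ_{n=0, n+a+L even}^{L} q^{n²/2} [M choose n][M+b+(L-a-n)/2 choose M+b]
[M-b+(L+a-n)/2 choose M-b]`. -/
def Trf (t : K) (L M a b : ℤ) : K :=
  ∑ n ∈ Finset.range (L.toNat + 1),
    if Even ((n : ℤ) + a + L) then
      t ^ ((n : ℤ) ^ 2) * gb (t ^ 2) M n * gb (t ^ 2) (M + b + (L - a - n) / 2) (M + b) *
        gb (t ^ 2) (M - b + (L + a - n) / 2) (M - b)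
    else 0

/-- `U(L,M,a,b) = T(L,M,a,b) + T(L,M,a+1,b)`. -/
def Uq (t : K) (L M a b : ℤ) : K :=
  Trf t L M a b + Trf t L M (a + 1) b

lemma step1 (L M n : ℕ) (hnL : n ≤ L) (j : ℤ) :
    ((if Even ((n : ℤ) + j + (L : ℤ)) then
      tq ^ ((n : ℤ) ^ 2) * gb (tq ^ 2) (M : ℤ) (n : ℤ) *
        gb (tq ^ 2) ((M : ℤ) + j + ((L : ℤ) - j - (n : ℤ)) / 2) ((M : ℤ) + j) *
        gb (tq ^ 2) ((M : ℤ) - j + ((L : ℤ) + j - (n : ℤ)) / 2) ((M : ℤ) - j)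
    else 0)
    + (if Even ((n : ℤ) + (j + 1) + (L : ℤ)) then
      tq ^ ((n : ℤ) ^ 2) * gb (tq ^ 2) (M : ℤ) (n : ℤ) *
        gb (tq ^ 2) ((M : ℤ) + j + ((L : ℤ) - (j + 1) - (n : ℤ)) / 2) ((M : ℤ) + j) *
        gb (tq ^ 2) ((M : ℤ) - j + ((L : ℤ) + (j + 1) - (n : ℤ)) / 2) ((M : ℤ) - j)
    else 0)) * ((-1 : K) ^ j * tq ^ (j * (j + 1)))
    = (tq ^ ((n : ℤ) ^ 2) * gb (tq ^ 2) (M : ℤ) (n : ℤ)) * ww (L - n) M M j := by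
  have hcast : (((L - n : ℕ)) : ℤ) = (L : ℤ) - (n : ℤ) := by
    push_cast [hnL]; ring
  rw [ww, hcast]
  rcases Int.even_or_odd ((n : ℤ) + j + (L : ℤ)) with he | ho
  · obtain ⟨c, hc⟩ := he
    rw [if_pos ⟨c, hc⟩, if_neg (by rintro ⟨d, hd⟩; omega)]
    rw [show ((L : ℤ) - j - (n : ℤ)) / 2 = ((L : ℤ) - (n : ℤ) - j) / 2 by omega,
        show ((L : ℤ) + j - (n : ℤ)) / 2 = ((L : ℤ) - (n : ℤ)) - ((L : ℤ) - (n : ℤ) - j) / 2 by omega]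
    ring
  · obtain ⟨c, hc⟩ := ho
    rw [if_neg (by rintro ⟨d, hd⟩; omega), if_pos (by exact ⟨c + 1, by omega⟩)]
    rw [show ((L : ℤ) - (j + 1) - (n : ℤ)) / 2 = ((L : ℤ) - (n : ℤ) - j) / 2 by omega,
        show ((L : ℤ) + (j + 1) - (n : ℤ)) / 2 = ((L : ℤ) - (n : ℤ)) - ((L : ℤ) - (n : ℤ) - j) / 2 by omega]
    ring


/-- U-delta identity: `Σ_{j∈ℤ} (-1)^j q^{j(j+1)/2} U(L,M,j,j) = δ_{M,0}`
(terms with `|j| > M` vanish; stated with `t = q^{1/2}`, so `q^{j(j+1)/2} = t^{j(j+1)}`). -/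
theorem U_delta (L M : ℕ) :
    ∑ j ∈ Finset.Icc (-(M : ℤ)) M,
      (-1 : K) ^ j * tq ^ (j * (j + 1)) * Uq tq L M j j =
      if M = 0 then 1 else 0 := by
  have hswap : ∀ j ∈ Finset.Icc (-(M : ℤ)) (M : ℤ),
      (-1 : K) ^ j * tq ^ (j * (j + 1)) * Uq tq L M j j
        = ∑ n ∈ Finset.range (L + 1),
            (tq ^ ((n : ℤ) ^ 2) * gb (tq ^ 2) (M : ℤ) (n : ℤ)) * ww (L - n) M M j := by
    intro j hj
    rw [Uq, Trf, Trf, show (((L : ℕ) : ℤ)).toNat = L by omega,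
      ← Finset.sum_add_distrib, mul_comm, Finset.sum_mul]
    apply Finset.sum_congr rfl
    intro n hn
    have hnL : n ≤ L := by
      simp only [Finset.mem_range] at hn; omega
    exact step1 L M n hnL j
  rw [Finset.sum_congr rfl hswap, Finset.sum_comm]
  have hinner : ∀ n ∈ Finset.range (L + 1),
      (∑ j ∈ Finset.Icc (-(M : ℤ)) (M : ℤ),
        (tq ^ ((n : ℤ) ^ 2) * gb (tq ^ 2) (M : ℤ) (n : ℤ)) * ww (L - n) M M j)
      = (tq ^ ((n : ℤ) ^ 2) * gb (tq ^ 2) (M : ℤ) (n : ℤ)) * (if M = 0 then 1 else 0) := by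
    intro n hn
    rw [← Finset.mul_sum]
    congr 1
    rw [← inn, inn_key]
  rw [Finset.sum_congr rfl hinner]
  rcases Nat.eq_zero_or_pos M with rfl | hM
  · simp only [if_pos rfl]
    rw [Finset.sum_eq_single_of_mem 0 (by simp)]
    · simp only [if_true]
      norm_num
      exact gb_k0 le_rfl
    · intro n hn hn0
      rw [gb_of_not (show ¬((0:ℤ) ≤ (n:ℤ) ∧ (n:ℤ) ≤ ((0:ℕ):ℤ)) by omega)]
      ring
  · rw [if_neg (by omega)]
    apply Finset.sum_eq_zero
    intro n hn
    ring
end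
end
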